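/- arXiv:1809.04006 — 2 statements merged into one kernel-verified Lean document; each statement's English description precedes it below -/
import Mathlib

section
/- Let δ > 1, 0 < γ < M, and let ŷ be the smaller fixed point of g(y) = y^δ + γ. Then ŷ < γδ/(δ−1). -/
/-! The bound `ŷ < δ ^ (1 / (1 - δ))` says exactly `ŷ ^ (δ - 1) < 1 / δ`, i.e. `δ ŷ ^ δ < ŷ`.
Multiplying the fixed-point equation `ŷ = ŷ ^ δ + γ` by `δ` then gives `δ ŷ < ŷ + δ γ`. -/

lemma Real.rpow_one_div_one_sub_eq_inv_rpow {δ : ℝ} (hδ : 0 ≤ δ) :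
    δ ^ (1 / (1 - δ)) = δ⁻¹ ^ (δ - 1)⁻¹ := by
  rw [Real.inv_rpow hδ, ← Real.rpow_neg hδ, one_div, ← inv_neg, neg_sub]

lemma Real.mul_rpow_lt_self_of_lt_rpow_one_div_one_sub {δ y : ℝ} (hδ : 1 < δ) (hy : 0 < y)
    (hlt : y < δ ^ (1 / (1 - δ))) : δ * y ^ δ < y := by
  have hδ0 : 0 < δ := by linarith
  rw [Real.rpow_one_div_one_sub_eq_inv_rpow hδ0.le,
    Real.lt_rpow_inv_iff_of_pos hy.le (inv_nonneg.mpr hδ0.le) (by linarith),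
    Real.rpow_sub_one hy.ne', div_lt_iff₀ hy, inv_mul_eq_div, lt_div_iff₀ hδ0] at hlt
  linarith

theorem yhat_bound_general (δ γ : ℝ) (hδ : 1 < δ)
    (yhat : ℝ) (h1 : 0 < yhat) (h2 : yhat < δ ^ ((1:ℝ)/(1-δ)))
    (hfix : yhat ^ δ + γ = yhat) :
    yhat < γ * δ / (δ - 1) := by
  have hpow := Real.mul_rpow_lt_self_of_lt_rpow_one_div_one_sub hδ h1 h2
  rw [lt_div_iff₀ (by linarith)]
  linear_combination hpow - δ * hfix

theorem yhat_bound (δ γ : ℝ) (hδ : 1 < δ) (hγ : 0 < γ)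
    (hγM : γ < δ ^ ((1:ℝ)/(1-δ)) - δ ^ (δ/(1-δ)))
    (yhat : ℝ) (h1 : 0 < yhat) (h2 : yhat < δ ^ ((1:ℝ)/(1-δ)))
    (hfix : yhat ^ δ + γ = yhat) :
    yhat < γ * δ / (δ - 1) :=
  yhat_bound_general δ γ hδ yhat h1 h2 hfix
end

section
/- Let K > 0, δ > 1, γ > 0, k₁ ∈ (0,1), ω > 0. If M < γ(1−k₁), where M = δ^{1/(1−δ)} − δ^{δ/(1−δ)}, then for every T > 0 the map G_T(s,y) = (s − K ln y − T, y^δ + γ(1 + k₁ sin(2ωs))) has no fixed point with y > 0. -/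
/-!
The second coordinate of a fixed point gives `y - y ^ δ = γ (1 + k₁ sin (2ωs)) ≥ γ (1 - k₁)`.
But `y ↦ y - y ^ δ` is concave with its maximum `M` at `c = δ ^ (1 / (1 - δ))`, where the slope
`δ c ^ (δ - 1)` of `y ^ δ` equals `1`; so `y - y ^ δ ≤ M < γ (1 - k₁)`.
-/

open Real

lemma rpow_add_mul_sub_le_rpow {p c y : ℝ} (hp : 1 ≤ p) (hc : 0 < c) (hy : 0 ≤ y) :
    c ^ p + p * c ^ (p - 1) * (y - c) ≤ y ^ p := by
  have hbernoulli := one_add_mul_self_le_rpow_one_add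
    (by linarith [div_nonneg hy hc.le] : -1 ≤ y / c - 1) hp
  rw [add_sub_cancel, div_rpow hy hc.le] at hbernoulli
  have hcp : 0 < c ^ p := rpow_pos_of_pos hc p
  have hslope : c ^ p * (p * (y / c - 1)) = p * c ^ (p - 1) * (y - c) := by
    rw [rpow_sub_one hc.ne']
    field_simp
  calc c ^ p + p * c ^ (p - 1) * (y - c) = c ^ p * (1 + p * (y / c - 1)) := by
        rw [mul_one_add, hslope]
    _ ≤ c ^ p * (y ^ p / c ^ p) := by gcongr
    _ = y ^ p := mul_div_cancel₀ _ hcp.ne'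

lemma rpow_one_div_one_sub_rpow_sub_one {δ : ℝ} (hδ : 0 < δ) (hδ1 : δ ≠ 1) :
    (δ ^ (1 / (1 - δ))) ^ (δ - 1) = δ⁻¹ := by
  have hne : 1 - δ ≠ 0 := sub_ne_zero.mpr hδ1.symm
  rw [← rpow_mul hδ.le, ← rpow_neg_one]
  congr 1
  field_simp
  ring

lemma self_sub_rpow_le {δ y : ℝ} (hδ : 1 < δ) (hy : 0 ≤ y) :
    y - y ^ δ ≤ δ ^ (1 / (1 - δ)) - δ ^ (δ / (1 - δ)) := by
  have hδ0 : 0 < δ := by linarith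
  set c := δ ^ (1 / (1 - δ))
  have hcδ : c ^ δ = δ ^ (δ / (1 - δ)) := by
    rw [← rpow_mul hδ0.le, one_div_mul_eq_div]
  have hslope : δ * c ^ (δ - 1) = 1 := by
    rw [rpow_one_div_one_sub_rpow_sub_one hδ0 hδ.ne', mul_inv_cancel₀ hδ0.ne']
  have htangent := rpow_add_mul_sub_le_rpow hδ.le (rpow_pos_of_pos hδ0 _ : 0 < c) hy
  rw [hslope, one_mul, hcδ] at htangent
  linarith

lemma mul_one_sub_le_mul_one_add_mul_sin {γ k : ℝ} (hγ : 0 ≤ γ) (hk : 0 ≤ k) (θ : ℝ) :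
    γ * (1 - k) ≤ γ * (1 + k * sin θ) := by
  gcongr
  nlinarith [neg_one_le_sin θ]

theorem no_fixed_points_general (K δ γ k₁ ω : ℝ)
    (hδ : 1 < δ) (hγ : 0 < γ) (hk₁ : 0 < k₁)
    (hM : δ ^ ((1:ℝ)/(1-δ)) - δ ^ (δ/(1-δ)) < γ * (1 - k₁)) :
    ∀ T : ℝ, 0 < T → ¬ ∃ s y : ℝ, 0 < y ∧
      s - K * Real.log y - T = s ∧
      y ^ δ + γ * (1 + k₁ * Real.sin (2*ω*s)) = y := by
  rintro T - ⟨s, y, hy, -, hfixed⟩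
  have hlower := mul_one_sub_le_mul_one_add_mul_sin hγ.le hk₁.le (2 * ω * s)
  have hupper := self_sub_rpow_le hδ hy.le
  linarith

theorem no_fixed_points (K δ γ k₁ ω : ℝ)
    (hK : 0 < K) (hδ : 1 < δ) (hγ : 0 < γ) (hk₁ : 0 < k₁) (hk₁' : k₁ < 1) (hω : 0 < ω)
    (hM : δ ^ ((1:ℝ)/(1-δ)) - δ ^ (δ/(1-δ)) < γ * (1 - k₁)) :
    ∀ T : ℝ, 0 < T → ¬ ∃ s y : ℝ, 0 < y ∧
      s - K * Real.log y - T = s ∧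
      y ^ δ + γ * (1 + k₁ * Real.sin (2*ω*s)) = y :=
  no_fixed_points_general K δ γ k₁ ω hδ hγ hk₁ hM
end
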